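/- arXiv:2501.09254 — 5 statements merged into one kernel-verified Lean document; each statement's English description precedes it below -/
import Mathlib

section
/- Let f(r) = -Σ_{x₁,x₂∈T} w(x₁)w(x₂)p(x₁≻x₂)·log(e^{r(x₁)}/(e^{r(x₁)}+e^{r(x₂)})) + (λ/2)Σ_{y∈T} w(y)r(y)², where T is a finite set, w: T → ℝ₊ with positive weights summing to 1, λ > 0, and p(x₁≻x₂) ∈ [0,1]. Then f is strongly convex (as a function of the vector (r(y))_{y∈T}) with parameter m = λ·min_{x∈T} w(x); in particular f has a unique global minimizer r* and for all r, f(r) - f(r*) ≥ (m/2)·‖r - r*‖₂². -/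
open Real Finset

lemma logexp_convex : ConvexOn ℝ Set.univ (fun t : ℝ => Real.log (1 + Real.exp t)) := by
  have hd : ∀ t : ℝ, HasDerivAt (fun t => Real.log (1 + Real.exp t))
      (Real.exp t / (1 + Real.exp t)) t := by
    intro t
    have h1 : HasDerivAt (fun t : ℝ => 1 + Real.exp t) (Real.exp t) t :=
      (Real.hasDerivAt_exp t).const_add 1
    exact h1.log (by positivity)
  have hdiff : Differentiable ℝ (fun t : ℝ => Real.log (1 + Real.exp t)) :=
    fun t => (hd t).differentiableAt
  apply Monotone.convexOn_univ_of_deriv hdiff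
  have hde : deriv (fun t : ℝ => Real.log (1 + Real.exp t))
      = fun t => Real.exp t / (1 + Real.exp t) := funext fun t => (hd t).deriv
  rw [hde]
  intro s t hst
  rw [div_le_div_iff₀ (by positivity) (by positivity)]
  nlinarith [Real.exp_le_exp.2 hst, Real.exp_pos s, Real.exp_pos t]

lemma neg_log_ratio (a b : ℝ) :
    -(Real.log (Real.exp a / (Real.exp a + Real.exp b))) = Real.log (1 + Real.exp (b - a)) := by
  have h : Real.exp a / (Real.exp a + Real.exp b) = (1 + Real.exp (b - a))⁻¹ := by
    rw [Real.exp_sub, inv_eq_one_div, eq_div_iff (by positivity)]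
    field_simp
  rw [h, Real.log_inv, neg_neg]

lemma eucl_norm_sq {T : Type*} [Fintype T] (r : EuclideanSpace ℝ T) :
    ‖r‖ ^ 2 = ∑ y, (r y) ^ 2 := by
  rw [EuclideanSpace.norm_eq, Real.sq_sqrt (by positivity)]
  simp [sq_abs]

lemma convexOn_finset_sum {E : Type*} [AddCommGroup E] [Module ℝ E] {ι : Type*}
    (s : Finset ι) (g : ι → E → ℝ) (h : ∀ i ∈ s, ConvexOn ℝ Set.univ (g i)) :
    ConvexOn ℝ Set.univ (fun r => ∑ i ∈ s, g i r) := by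
  classical
  induction s using Finset.induction with
  | empty => simpa using convexOn_const (0 : ℝ) convex_univ
  | insert _ _ hx ih =>
    simp only [Finset.sum_insert hx]
    exact (h _ (Finset.mem_insert_self _ _)).add
      (ih fun i hi => h i (Finset.mem_insert_of_mem hi))

noncomputable def evalL {T : Type*} [Fintype T] (x : T) : EuclideanSpace ℝ T →ₗ[ℝ] ℝ :=
  EuclideanSpace.projₗ x

lemma convex_term {T : Type*} [Fintype T] (x₁ x₂ : T) :
    ConvexOn ℝ Set.univ
      (fun r : EuclideanSpace ℝ T => Real.log (1 + Real.exp (r x₂ - r x₁))) := by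
  have h := logexp_convex.comp_linearMap (evalL x₂ - evalL x₁)
  exact h

lemma convex_sq_coord {T : Type*} [Fintype T] (y : T) :
    ConvexOn ℝ Set.univ (fun r : EuclideanSpace ℝ T => (r y) ^ 2) := by
  have h := (Even.convexOn_pow (even_two) (𝕜 := ℝ)).comp_linearMap (evalL y)
  exact h

lemma norm_combo_sq {E : Type*} [NormedAddCommGroup E] [InnerProductSpace ℝ E]
    (a b : E) (t : ℝ) :
    ‖(1 - t) • a + t • b‖ ^ 2
      = (1 - t) * ‖a‖ ^ 2 + t * ‖b‖ ^ 2 - t * (1 - t) * ‖a - b‖ ^ 2 := by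
  simp only [← real_inner_self_eq_norm_sq]
  simp only [inner_add_add_self, inner_sub_sub_self, real_inner_smul_left,
    real_inner_smul_right, real_inner_comm a b]
  ring

/-- Strong convexity of the weighted regularized MLE objective with parameter
`m = λ · min_{x∈T} w(x)`: the objective minus `(m/2)‖·‖²` is convex, and it has a
unique global minimizer `r*` with `f(r) - f(r*) ≥ (m/2)‖r - r*‖²` for all `r`. -/
theorem weighted_objective_strongly_convex {T : Type*} [Fintype T] [Nonempty T]
    (w : T → ℝ) (hw : ∀ y, 0 < w y) (hw1 : ∑ y, w y = 1)
    (lam : ℝ) (hlam : 0 < lam)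
    (p : T → T → ℝ) (hp : ∀ x₁ x₂, p x₁ x₂ ∈ Set.Icc (0 : ℝ) 1)
    (f : EuclideanSpace ℝ T → ℝ)
    (hf : ∀ r : EuclideanSpace ℝ T,
      f r = -(∑ x₁, ∑ x₂, w x₁ * w x₂ * p x₁ x₂ *
              Real.log (Real.exp (r x₁) / (Real.exp (r x₁) + Real.exp (r x₂))))
            + lam / 2 * ∑ y, w y * (r y)^2) :
    ConvexOn ℝ Set.univ
      (fun r : EuclideanSpace ℝ T =>
        f r - (lam * Finset.univ.inf' Finset.univ_nonempty w) / 2 * ‖r‖^2) ∧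
    ∃ rstar : EuclideanSpace ℝ T,
      (∀ r, f rstar ≤ f r) ∧
      (∀ r', (∀ r, f r' ≤ f r) → r' = rstar) ∧
      (∀ r, (lam * Finset.univ.inf' Finset.univ_nonempty w) / 2 * ‖r - rstar‖^2
              ≤ f r - f rstar) := by
  classical
  set m : ℝ := lam * Finset.univ.inf' Finset.univ_nonempty w with hm
  have hminf : ∀ y, Finset.univ.inf' Finset.univ_nonempty w ≤ w y := fun y =>
    Finset.inf'_le _ (Finset.mem_univ y)
  have hm0 : 0 < m :=
    mul_pos hlam (by rw [Finset.lt_inf'_iff]; exact fun y _ => hw y)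
  -- explicit form of the shifted function
  have hshift : (fun r : EuclideanSpace ℝ T => f r - m / 2 * ‖r‖ ^ 2)
      = fun r => (∑ x₁, ∑ x₂, w x₁ * w x₂ * p x₁ x₂ *
            Real.log (1 + Real.exp (r x₂ - r x₁)))
          + ∑ y, (lam * w y - m) / 2 * (r y) ^ 2 := by
    funext r
    rw [hf r, eucl_norm_sq]
    have h1 : -(∑ x₁, ∑ x₂, w x₁ * w x₂ * p x₁ x₂ *
        Real.log (Real.exp (r x₁) / (Real.exp (r x₁) + Real.exp (r x₂))))
        = ∑ x₁, ∑ x₂ : T, w x₁ * w x₂ * p x₁ x₂ *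
            Real.log (1 + Real.exp (r x₂ - r x₁)) := by
      rw [← Finset.sum_neg_distrib]
      refine Finset.sum_congr rfl fun x₁ _ => ?_
      rw [← Finset.sum_neg_distrib]
      refine Finset.sum_congr rfl fun x₂ _ => ?_
      rw [← neg_log_ratio]; ring
    rw [h1, add_sub_assoc]
    congr 1
    rw [Finset.mul_sum, Finset.mul_sum, ← Finset.sum_sub_distrib]
    refine Finset.sum_congr rfl fun y _ => ?_
    ring
  have hcnn : ∀ x₁ x₂ : T, 0 ≤ w x₁ * w x₂ * p x₁ x₂ := fun x₁ x₂ =>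
    mul_nonneg (mul_nonneg (hw x₁).le (hw x₂).le) (hp x₁ x₂).1
  have hconv : ConvexOn ℝ Set.univ
      (fun r : EuclideanSpace ℝ T => f r - m / 2 * ‖r‖ ^ 2) := by
    rw [hshift]
    apply ConvexOn.add
    · apply convexOn_finset_sum
      intro x₁ _
      apply convexOn_finset_sum
      intro x₂ _
      simpa [smul_eq_mul] using (convex_term x₁ x₂).smul (hcnn x₁ x₂)
    · apply convexOn_finset_sum
      intro y _
      have hc : 0 ≤ (lam * w y - m) / 2 := by
        have h := hminf y
        nlinarith [hlam.le]
      simpa [smul_eq_mul] using (convex_sq_coord y).smul hc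
  -- lower bound
  have hlb : ∀ r : EuclideanSpace ℝ T, m / 2 * ‖r‖ ^ 2 ≤ f r := by
    intro r
    rw [hf r, eucl_norm_sq]
    have hneg : (∑ x₁, ∑ x₂, w x₁ * w x₂ * p x₁ x₂ *
        Real.log (Real.exp (r x₁) / (Real.exp (r x₁) + Real.exp (r x₂)))) ≤ 0 := by
      apply Finset.sum_nonpos; intro x₁ _
      apply Finset.sum_nonpos; intro x₂ _
      have hlog : Real.log (Real.exp (r x₁) / (Real.exp (r x₁) + Real.exp (r x₂))) ≤ 0 := by
        apply Real.log_nonpos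
        · positivity
        · rw [div_le_one (by positivity)]
          nlinarith [Real.exp_pos (r x₂)]
      nlinarith [hcnn x₁ x₂]
    have hsum : m / 2 * ∑ y, (r y) ^ 2 ≤ lam / 2 * ∑ y, w y * (r y) ^ 2 := by
      rw [Finset.mul_sum, Finset.mul_sum]
      apply Finset.sum_le_sum
      intro y _
      have h := hminf y
      rw [hm]
      nlinarith [mul_nonneg (mul_nonneg hlam.le (sq_nonneg (r y))) (sub_nonneg.2 h)]
    linarith
  -- continuity
  have hcoord : ∀ x : T, Continuous fun r : EuclideanSpace ℝ T => r x := fun x => by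
    simpa using (EuclideanSpace.proj (𝕜 := ℝ) x).continuous
  have hfc : Continuous f := by
    have hfe : f = fun r : EuclideanSpace ℝ T =>
        -(∑ x₁, ∑ x₂, w x₁ * w x₂ * p x₁ x₂ *
            Real.log (Real.exp (r x₁) / (Real.exp (r x₁) + Real.exp (r x₂))))
          + lam / 2 * ∑ y, w y * (r y) ^ 2 := funext hf
    rw [hfe]
    apply Continuous.add
    · apply Continuous.neg
      apply continuous_finset_sum; intro x₁ _
      apply continuous_finset_sum; intro x₂ _
      apply Continuous.mul continuous_const
      apply Continuous.log
      · exact (Real.continuous_exp.comp (hcoord x₁)).div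
          ((Real.continuous_exp.comp (hcoord x₁)).add
            (Real.continuous_exp.comp (hcoord x₂)))
          (fun r => by positivity)
      · intro r; positivity
    · exact continuous_const.mul (continuous_finset_sum _ fun y _ =>
        continuous_const.mul ((hcoord y).pow 2))
  -- existence of a minimizer by coercivity
  have hcoer : Filter.Tendsto f (Filter.cocompact _) Filter.atTop := by
    have h1 : Filter.Tendsto (fun s : ℝ => m / 2 * s ^ 2) Filter.atTop Filter.atTop :=
      (Filter.tendsto_pow_atTop two_ne_zero).const_mul_atTop (by positivity)
    exact Filter.tendsto_atTop_mono hlb (h1.comp tendsto_norm_cocompact_atTop)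
  obtain ⟨rstar, hmin⟩ := hfc.exists_forall_le hcoer
  -- quadratic growth
  have hgrow : ∀ r, m / 2 * ‖r - rstar‖ ^ 2 ≤ f r - f rstar := by
    intro r
    have hd0 : (0:ℝ) ≤ ‖r - rstar‖ ^ 2 := by positivity
    have hK : 0 ≤ f r - f rstar := by linarith [hmin r]
    by_contra hcon
    push_neg at hcon
    set d := ‖r - rstar‖ ^ 2 with hd
    set K := f r - f rstar with hKdef
    have hdpos : 0 < d := by nlinarith
    set t : ℝ := (m / 2 * d - K) / (m * d) with ht
    have ht0 : 0 < t := div_pos (by linarith) (by positivity)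
    have ht1 : t < 1 := by
      rw [ht, div_lt_one (by positivity)]
      nlinarith
    have hcx := hconv.2 (Set.mem_univ rstar) (Set.mem_univ r)
      (by linarith : (0:ℝ) ≤ 1 - t) ht0.le (by ring)
    simp only [smul_eq_mul] at hcx
    rw [norm_combo_sq rstar r t] at hcx
    have hrev : ‖rstar - r‖ ^ 2 = d := by rw [hd, norm_sub_rev]
    rw [hrev] at hcx
    have hmin' := hmin ((1 - t) • rstar + t • r)
    have htm : t * (m * d) = m / 2 * d - K := div_mul_cancel₀ _ (by positivity)
    nlinarith [hcx, hmin', htm, mul_pos ht0 hdpos]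
  refine ⟨hconv, rstar, hmin, ?_, hgrow⟩
  intro r' hr'
  have h1 := hgrow r'
  have h2 : f r' ≤ f rstar := hr' rstar
  have h3 : ‖r' - rstar‖ ^ 2 ≤ 0 := by nlinarith
  have h4 : ‖r' - rstar‖ = 0 := by nlinarith [norm_nonneg (r' - rstar), sq_nonneg (‖r' - rstar‖)]
  rwa [norm_sub_eq_zero_iff] at h4
end

section
/- With the weighted MLE r̂_w as above, for any x, y ∈ M, r̂_w(x) ≥ r̂_w(y) if and only if the weighted average win rate of x is at least that of y, i.e., Σ_{z∈M} w(z)p(x≻z) ≥ Σ_{z∈M} w(z)p(y≻z). -/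
open Real Finset

lemma hderiv_log_ratio (a b da db : ℝ) :
    HasDerivAt (fun t => Real.log (Real.exp (a + da*t) / (Real.exp (a + da*t) + Real.exp (b + db*t))))
      (da - (da * Real.exp a + db * Real.exp b)/(Real.exp a + Real.exp b)) 0 := by
  have hS : ∀ t : ℝ, (0:ℝ) < Real.exp (a + da*t) + Real.exp (b + db*t) := fun t =>
    add_pos (Real.exp_pos _) (Real.exp_pos _)
  have heq : (fun t => Real.log (Real.exp (a + da*t) / (Real.exp (a + da*t) + Real.exp (b + db*t))))
      = fun t => (a + da*t) - Real.log (Real.exp (a + da*t) + Real.exp (b + db*t)) := by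
    funext t
    rw [Real.log_div (Real.exp_ne_zero _) (hS t).ne', Real.log_exp]
  rw [heq]
  have h1 : HasDerivAt (fun t : ℝ => a + da * t) da 0 := by
    simpa using ((hasDerivAt_id (0:ℝ)).const_mul da).const_add a
  have h2 : HasDerivAt (fun t : ℝ => b + db * t) db 0 := by
    simpa using ((hasDerivAt_id (0:ℝ)).const_mul db).const_add b
  have h3 : HasDerivAt (fun t : ℝ => Real.exp (a + da*t) + Real.exp (b + db*t))
      (da * Real.exp a + db * Real.exp b) 0 := by
    have := (h1.exp).fun_add (h2.exp)
    simpa [mul_comm] using this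
  have h4 := (h3.log (by simpa using (hS 0).ne'))
  have := h1.fun_sub h4
  simpa [mul_comm] using this

lemma hderiv_sq (c d : ℝ) : HasDerivAt (fun t : ℝ => (c + d*t)^2) (2*c*d) 0 := by
  have h1 : HasDerivAt (fun t : ℝ => c + d * t) d 0 := by
    simpa using ((hasDerivAt_id (0:ℝ)).const_mul d).const_add c
  simpa [mul_comm, mul_assoc] using h1.fun_pow 2

lemma sig_mono {c : ℝ} (hc : 0 < c) : Monotone (fun u => Real.exp u / (Real.exp u + c)) := by
  intro u v huv
  rw [div_le_div_iff₀ (by positivity) (by positivity)]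
  have := Real.exp_le_exp.2 huv
  nlinarith [Real.exp_pos u, Real.exp_pos v]

/-- The weighted MLE ranks alternatives in the same order as the weighted average
win rate: `r̂_w(x) ≥ r̂_w(y)` iff `wAWR(x) ≥ wAWR(y)`. -/
theorem weighted_mle_ranking_matches_weighted_win_rate {M : Type*} [Fintype M] [Nonempty M]
    (w : M → ℝ) (hw : ∀ y, 0 < w y) (hw1 : ∑ y, w y = 1)
    (lam : ℝ) (hlam : 0 < lam)
    (p : M → M → ℝ) (hp01 : ∀ x y, p x y ∈ Set.Icc (0 : ℝ) 1)
    (hpsym : ∀ x y, p x y + p y x = 1) (hprefl : ∀ x, p x x = 1/2)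
    (f : (M → ℝ) → ℝ)
    (hf : ∀ r : M → ℝ,
      f r = -(∑ x₁, ∑ x₂, w x₁ * w x₂ * p x₁ x₂ *
              Real.log (Real.exp (r x₁) / (Real.exp (r x₁) + Real.exp (r x₂))))
            + lam / 2 * ∑ x, w x * (r x)^2)
    (rhat : M → ℝ) (hrhat : ∀ r, f rhat ≤ f r) :
    ∀ x y : M,
      rhat x ≥ rhat y ↔ ∑ z, w z * p x z ≥ ∑ z, w z * p y z := by
  classical
  -- notation for the sigmoid
  set σ : M → M → ℝ := fun a b => Real.exp (rhat a) / (Real.exp (rhat a) + Real.exp (rhat b))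
    with hσ
  -- First-order condition
  have FOC : ∀ x : M, lam * rhat x + ∑ z, w z * σ x z = ∑ z, w z * p x z := by
    intro x
    set d : M → ℝ := fun z => if z = x then 1 else 0 with hd
    set φ : ℝ → ℝ := fun t => f (Function.update rhat x (rhat x + t)) with hφdef
    have hu : ∀ (t : ℝ) (z : M), Function.update rhat x (rhat x + t) z = rhat z + d z * t := by
      intro t z
      by_cases h : z = x <;> simp [Function.update_apply, hd, h]
    have hφ : φ = fun t => -(∑ x₁, ∑ x₂, w x₁ * w x₂ * p x₁ x₂ *
        Real.log (Real.exp (rhat x₁ + d x₁ * t) /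
          (Real.exp (rhat x₁ + d x₁ * t) + Real.exp (rhat x₂ + d x₂ * t))))
        + lam / 2 * ∑ z, w z * (rhat z + d z * t)^2 := by
      funext t
      simp only [hφdef, hf, hu]
    set D : ℝ := -(∑ x₁, ∑ x₂, w x₁ * w x₂ * p x₁ x₂ *
        (d x₁ - (d x₁ * Real.exp (rhat x₁) + d x₂ * Real.exp (rhat x₂)) /
          (Real.exp (rhat x₁) + Real.exp (rhat x₂))))
        + lam / 2 * ∑ z, w z * (2 * rhat z * d z) with hD
    have hder : HasDerivAt φ D 0 := by
      rw [hφ, hD]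
      exact ((HasDerivAt.fun_sum fun x₁ _ => HasDerivAt.fun_sum fun x₂ _ =>
          (hderiv_log_ratio (rhat x₁) (rhat x₂) (d x₁) (d x₂)).const_mul _).fun_neg).fun_add
        ((HasDerivAt.fun_sum fun z _ => (hderiv_sq (rhat z) (d z)).const_mul (w z)).const_mul (lam/2))
    have hmin : IsLocalMin φ 0 := by
      apply Filter.Eventually.of_forall
      intro t
      have h0 : φ 0 = f rhat := by
        simp [hφdef]
      rw [h0]
      exact hrhat _
    have hD0 : D = 0 := hmin.hasDerivAt_eq_zero hder
    -- simplify D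
    set A : M → ℝ := fun z => w x * w z * p x z *
        (1 - Real.exp (rhat x) / (Real.exp (rhat x) + Real.exp (rhat z))) with hA
    set B : M → ℝ := fun z => -(w z * w x * p z x *
        (Real.exp (rhat x) / (Real.exp (rhat z) + Real.exp (rhat x)))) with hB
    have hsplit : ∀ x₁ x₂ : M, w x₁ * w x₂ * p x₁ x₂ *
        (d x₁ - (d x₁ * Real.exp (rhat x₁) + d x₂ * Real.exp (rhat x₂)) /
          (Real.exp (rhat x₁) + Real.exp (rhat x₂)))
        = (if x₁ = x then A x₂ else 0) + (if x₂ = x then B x₁ else 0) := by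
      intro x₁ x₂
      have hS : Real.exp (rhat x₁) + Real.exp (rhat x₂) ≠ 0 := by positivity
      by_cases h1 : x₁ = x <;> by_cases h2 : x₂ = x <;>
        simp only [hd, hA, hB, h1, h2, if_pos, if_neg, ite_true, ite_false] <;>
        first
        | (subst h1; subst h2; field_simp; ring)
        | (subst h1; field_simp; ring)
        | (subst h2; field_simp; ring)
        | (field_simp; ring)
    have hsum1 : (∑ x₁, ∑ x₂, w x₁ * w x₂ * p x₁ x₂ *
        (d x₁ - (d x₁ * Real.exp (rhat x₁) + d x₂ * Real.exp (rhat x₂)) /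
          (Real.exp (rhat x₁) + Real.exp (rhat x₂))))
        = (∑ z, A z) + (∑ z, B z) := by
      have : ∀ x₁ : M, (∑ x₂, w x₁ * w x₂ * p x₁ x₂ *
          (d x₁ - (d x₁ * Real.exp (rhat x₁) + d x₂ * Real.exp (rhat x₂)) /
            (Real.exp (rhat x₁) + Real.exp (rhat x₂))))
          = (if x₁ = x then ∑ z, A z else 0) + B x₁ := by
        intro x₁
        rw [Finset.sum_congr rfl (fun x₂ _ => hsplit x₁ x₂), Finset.sum_add_distrib]
        congr 1
        · split_ifs with h <;> simp
        · simp
      rw [Finset.sum_congr rfl (fun x₁ _ => this x₁), Finset.sum_add_distrib]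
      simp
    have hsum2 : (∑ z, w z * (2 * rhat z * d z)) = w x * (2 * rhat x) := by
      have : ∀ z : M, w z * (2 * rhat z * d z) = if z = x then w z * (2 * rhat z) else 0 := by
        intro z; by_cases h : z = x <;> simp [hd, h]
      rw [Finset.sum_congr rfl (fun z _ => this z)]
      simp
    have hAB : ∀ z : M, A z + B z = w x * (w z * (p x z - σ x z)) := by
      intro z
      have hpz : p z x = 1 - p x z := by linarith [hpsym x z]
      have hS : Real.exp (rhat x) + Real.exp (rhat z) ≠ 0 := by positivity
      have hS' : Real.exp (rhat z) + Real.exp (rhat x) ≠ 0 := by positivity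
      simp only [hA, hB, hσ, hpz]
      field_simp
      ring
    have hkey : w x * ((∑ z, w z * p x z) - ∑ z, w z * σ x z) = w x * (lam * rhat x) := by
      have e1 : (∑ z, A z) + (∑ z, B z) = w x * ((∑ z, w z * p x z) - ∑ z, w z * σ x z) := by
        rw [← Finset.sum_add_distrib, Finset.sum_congr rfl (fun z _ => hAB z),
          ← Finset.mul_sum, ← Finset.sum_sub_distrib]
        congr 1
        apply Finset.sum_congr rfl
        intro z _
        ring
      have := hD0
      rw [hD, hsum1, hsum2, e1] at this
      linarith
    have := mul_left_cancel₀ (hw x).ne' hkey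
    linarith
  -- strict monotonicity
  set F : ℝ → ℝ := fun u => lam * u + ∑ z, w z * (Real.exp u / (Real.exp u + Real.exp (rhat z)))
    with hF
  have hmono : StrictMono F := by
    apply StrictMono.add_monotone
    · intro a b h; exact mul_lt_mul_of_pos_left h hlam
    · intro a b h
      apply Finset.sum_le_sum
      intro z _
      exact mul_le_mul_of_nonneg_left (sig_mono (Real.exp_pos _) h) (hw z).le
  have hFr : ∀ x : M, F (rhat x) = ∑ z, w z * p x z := fun x => FOC x
  intro x y
  rw [ge_iff_le, ge_iff_le, ← hFr x, ← hFr y, hmono.le_iff_le]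
end

section
/- Consider the weighted MLE over M' = M ∪ {x'} with weights w' and win-rate function p₂ satisfying p₂(x'≻y) = p₂(x≻y) and p₂(y≻x') = p₂(y≻x) for all y (where x ∈ M is a fixed alternative), in addition to p₂(a≻b)+p₂(b≻a)=1 and p₂(a≻a)=1/2 for all a,b ∈ M'. Then the unique minimizer r₂ of the weighted objective over M' satisfies r₂(x') = r₂(x). -/
open Real Finset

lemma lemA_BT {α β : ℝ} (hα : 0 < α) (hβ : 0 < β) (u v c : ℝ) :
    (α + β) * Real.log (Real.exp ((α * u + β * v) / (α + β)) + Real.exp c) ≤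
      α * Real.log (Real.exp u + Real.exp c) + β * Real.log (Real.exp v + Real.exp c) := by
  have hs : 0 < α + β := by linarith
  set a' := α / (α + β) with ha'def
  set b' := β / (α + β) with hb'def
  have ha' : 0 ≤ a' := by positivity
  have hb' : 0 ≤ b' := by positivity
  have hab : a' + b' = 1 := by
    rw [ha'def, hb'def, ← add_div, div_self hs.ne']
  set X := Real.exp u + Real.exp c with hXdef
  set Y := Real.exp v + Real.exp c with hYdef
  have hX : 0 < X := by positivity
  have hY : 0 < Y := by positivity
  have hm : (α * u + β * v) / (α + β) = a' * u + b' * v := by rw [ha'def, hb'def]; ring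
  have hXY : 0 < X ^ a' * Y ^ b' := by positivity
  have h1 := Real.geom_mean_le_arith_mean2_weighted ha' hb'
    (le_of_lt (div_pos (exp_pos u) hX)) (le_of_lt (div_pos (exp_pos v) hY)) hab
  have h2 := Real.geom_mean_le_arith_mean2_weighted ha' hb'
    (le_of_lt (div_pos (exp_pos c) hX)) (le_of_lt (div_pos (exp_pos c) hY)) hab
  have e1 : (Real.exp u / X) ^ a' * (Real.exp v / Y) ^ b'
      = Real.exp (a' * u + b' * v) / (X ^ a' * Y ^ b') := by
    rw [Real.div_rpow (le_of_lt (exp_pos u)) hX.le, Real.div_rpow (le_of_lt (exp_pos v)) hY.le,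
      div_mul_div_comm, ← Real.exp_mul, ← Real.exp_mul, ← Real.exp_add]
    ring_nf
  have e2 : (Real.exp c / X) ^ a' * (Real.exp c / Y) ^ b'
      = Real.exp c / (X ^ a' * Y ^ b') := by
    rw [Real.div_rpow (le_of_lt (exp_pos c)) hX.le, Real.div_rpow (le_of_lt (exp_pos c)) hY.le,
      div_mul_div_comm, ← Real.exp_mul, ← Real.exp_mul, ← Real.exp_add, ← mul_add, hab, mul_one]
  have hsum : Real.exp (a' * u + b' * v) / (X ^ a' * Y ^ b') + Real.exp c / (X ^ a' * Y ^ b') ≤ 1 := by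
    rw [← e1, ← e2]
    have : a' * (Real.exp u / X) + b' * (Real.exp v / Y)
        + (a' * (Real.exp c / X) + b' * (Real.exp c / Y)) = 1 := by
      have hrw : a' * (Real.exp u / X) + b' * (Real.exp v / Y)
          + (a' * (Real.exp c / X) + b' * (Real.exp c / Y))
          = a' * ((Real.exp u + Real.exp c) / X) + b' * ((Real.exp v + Real.exp c) / Y) := by
        ring
      rw [hrw, div_self hX.ne', div_self hY.ne', mul_one, mul_one, hab]
    linarith
  have hle : Real.exp (a' * u + b' * v) + Real.exp c ≤ X ^ a' * Y ^ b' := by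
    rw [← add_div, div_le_one hXY] at hsum
    exact hsum
  have hlog : Real.log (Real.exp (a' * u + b' * v) + Real.exp c) ≤ a' * Real.log X + b' * Real.log Y := by
    calc Real.log (Real.exp (a' * u + b' * v) + Real.exp c) ≤ Real.log (X ^ a' * Y ^ b') :=
          Real.log_le_log (by positivity) hle
      _ = a' * Real.log X + b' * Real.log Y := by
          rw [Real.log_mul (by positivity) (by positivity), Real.log_rpow hX, Real.log_rpow hY]
  rw [hm]
  have := mul_le_mul_of_nonneg_left hlog hs.le
  calc (α + β) * Real.log (Real.exp (a' * u + b' * v) + Real.exp c)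
      ≤ (α + β) * (a' * Real.log X + b' * Real.log Y) := this
    _ = ((α + β) * a') * Real.log X + ((α + β) * b') * Real.log Y := by ring
    _ = α * Real.log X + β * Real.log Y := by
        rw [ha'def, hb'def, mul_div_cancel₀ _ hs.ne', mul_div_cancel₀ _ hs.ne']

noncomputable def psiBT (u v : ℝ) : ℝ := Real.log (Real.exp u + Real.exp v) - u

lemma psiBT_diag (t : ℝ) : psiBT t t = Real.log 2 := by
  unfold psiBT
  rw [← two_mul, Real.log_mul two_ne_zero (Real.exp_ne_zero t), Real.log_exp]
  ring

lemma lemB_BT (u v : ℝ) : Real.log 2 + Real.log 2 ≤ psiBT u v + psiBT v u := by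
  unfold psiBT
  have key : 2 * Real.exp ((u + v) / 2) ≤ Real.exp u + Real.exp v := by
    nlinarith [sq_nonneg (Real.exp (u/2) - Real.exp (v/2)),
      (show Real.exp u = Real.exp (u/2) * Real.exp (u/2) by rw [← Real.exp_add]; ring_nf),
      (show Real.exp v = Real.exp (v/2) * Real.exp (v/2) by rw [← Real.exp_add]; ring_nf),
      (show Real.exp ((u+v)/2) = Real.exp (u/2) * Real.exp (v/2) by rw [← Real.exp_add]; ring_nf)]
  have h2 : Real.log (2 * Real.exp ((u + v) / 2)) ≤ Real.log (Real.exp u + Real.exp v) :=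
    Real.log_le_log (by positivity) key
  rw [Real.log_mul two_ne_zero (Real.exp_ne_zero _), Real.log_exp] at h2
  rw [add_comm (Real.exp v) (Real.exp u)]
  linarith

lemma lemC_BT {α β : ℝ} (hα : 0 < α) (hβ : 0 < β) {u v : ℝ} (hne : u ≠ v) :
    (α + β) * ((α * u + β * v) / (α + β)) ^ 2 < α * u ^ 2 + β * v ^ 2 := by
  have hs : 0 < α + β := by linarith
  set m := (α * u + β * v) / (α + β) with hm
  have hmm : m * (α + β) = α * u + β * v := div_mul_cancel₀ _ hs.ne'
  have key : (α + β) * ((α + β) * m ^ 2) = (α * u + β * v) ^ 2 := by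
    rw [← hmm]; ring
  have key2 : (α + β) * (α * u ^ 2 + β * v ^ 2) - (α * u + β * v) ^ 2 = α * β * (u - v) ^ 2 := by
    ring
  have h3 : 0 < α * β * (u - v) ^ 2 := by
    have : u - v ≠ 0 := sub_ne_zero.mpr hne
    positivity
  have h4 : (α + β) * ((α + β) * m ^ 2) < (α + β) * (α * u ^ 2 + β * v ^ 2) := by linarith
  exact lt_of_mul_lt_mul_left h4 hs.le

lemma lemA1_BT {α β : ℝ} (hα : 0 < α) (hβ : 0 < β) (u v c : ℝ) :
    (α + β) * psiBT ((α * u + β * v) / (α + β)) c ≤ α * psiBT u c + β * psiBT v c := by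
  have hs : 0 < α + β := by linarith
  have hm : (α + β) * ((α * u + β * v) / (α + β)) = α * u + β * v :=
    mul_div_cancel₀ _ hs.ne'
  have h := lemA_BT hα hβ u v c
  unfold psiBT
  nlinarith [h, hm]

lemma lemA2_BT {α β : ℝ} (hα : 0 < α) (hβ : 0 < β) (u v c : ℝ) :
    (α + β) * psiBT c ((α * u + β * v) / (α + β)) ≤ α * psiBT c u + β * psiBT c v := by
  have h := lemA_BT hα hβ u v c
  unfold psiBT
  rw [add_comm (Real.exp c) (Real.exp ((α * u + β * v) / (α + β))),
    add_comm (Real.exp c) (Real.exp u), add_comm (Real.exp c) (Real.exp v)]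
  nlinarith [h]

/-- If `x'` is an exact clone of `x` in the win-rate data (`p₂(x'≻y) = p₂(x≻y)` and
`p₂(y≻x') = p₂(y≻x)` for all `y`), then the weighted MLE assigns them the same
reward: `r₂(x') = r₂(x)`. -/
theorem weighted_mle_clone_same_reward {M' : Type*} [Fintype M'] [Nonempty M']
    (x x' : M') (hxx' : x ≠ x')
    (w' : M' → ℝ) (hw' : ∀ y, 0 < w' y) (hw'1 : ∑ y, w' y = 1)
    (lam : ℝ) (hlam : 0 < lam)
    (p₂ : M' → M' → ℝ) (hp01 : ∀ a b, p₂ a b ∈ Set.Icc (0 : ℝ) 1)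
    (hpsym : ∀ a b, p₂ a b + p₂ b a = 1) (hprefl : ∀ a, p₂ a a = 1/2)
    (hclone : ∀ y : M', p₂ x' y = p₂ x y ∧ p₂ y x' = p₂ y x)
    (f : (M' → ℝ) → ℝ)
    (hf : ∀ r : M' → ℝ,
      f r = -(∑ a, ∑ b, w' a * w' b * p₂ a b *
              Real.log (Real.exp (r a) / (Real.exp (r a) + Real.exp (r b))))
            + lam / 2 * ∑ a, w' a * (r a)^2)
    (r₂ : M' → ℝ) (hr₂ : ∀ r, f r₂ ≤ f r) :
    r₂ x' = r₂ x := by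
  classical
  by_contra hne0
  have hne : r₂ x ≠ r₂ x' := fun h => hne0 h.symm
  set α := w' x with hαdef
  set β := w' x' with hβdef
  have hα : 0 < α := hw' x
  have hβ : 0 < β := hw' x'
  set u := r₂ x with hudef
  set v := r₂ x' with hvdef
  set m := (α * u + β * v) / (α + β) with hmdef
  set c : M' → M' → ℝ := fun a b => w' a * w' b * p₂ a b with hcdef
  set r' : M' → ℝ := fun y => if y = x ∨ y = x' then m else r₂ y with hr'def
  have hr'x : r' x = m := by simp [hr'def]
  have hr'x' : r' x' = m := by simp [hr'def]
  set T : Finset M' := Finset.univ \ ({x, x'} : Finset M') with hTdef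
  have hT : ∀ a ∈ T, r' a = r₂ a := by
    intro a ha
    rw [hTdef, Finset.mem_sdiff, Finset.mem_insert, Finset.mem_singleton] at ha
    push_neg at ha
    simp [hr'def, ha.2.1, ha.2.2]
  -- sum splitting helper
  have hsplit : ∀ g : M' → ℝ, ∑ a, g a = g x + g x' + ∑ a ∈ T, g a := by
    intro g
    rw [← Finset.sum_sdiff (Finset.subset_univ ({x, x'} : Finset M')),
      Finset.sum_pair hxx']
    ring
  -- rewrite f
  have freq : ∀ r : M' → ℝ,
      f r = (∑ a, ∑ b, c a b * psiBT (r a) (r b)) + lam / 2 * ∑ a, w' a * (r a) ^ 2 := by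
    intro r
    rw [hf r]
    congr 1
    have hterm : ∀ a b : M',
        w' a * w' b * p₂ a b *
          Real.log (Real.exp (r a) / (Real.exp (r a) + Real.exp (r b)))
        = -(c a b * psiBT (r a) (r b)) := by
      intro a b
      rw [Real.log_div (Real.exp_ne_zero _) (by positivity), Real.log_exp]
      unfold psiBT
      rw [hcdef]
      ring
    simp only [hterm, Finset.sum_neg_distrib, neg_neg]
  suffices hlt : f r' < f r₂ by exact absurd (hr₂ r') (not_le.mpr hlt)
  rw [freq r', freq r₂]
  have hLsplit : ∀ r : M' → ℝ,
      (∑ a, ∑ b, c a b * psiBT (r a) (r b)) =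
        (c x x * psiBT (r x) (r x) + c x x' * psiBT (r x) (r x')
          + ∑ b ∈ T, c x b * psiBT (r x) (r b))
        + (c x' x * psiBT (r x') (r x) + c x' x' * psiBT (r x') (r x')
          + ∑ b ∈ T, c x' b * psiBT (r x') (r b))
        + ∑ a ∈ T, (c a x * psiBT (r a) (r x) + c a x' * psiBT (r a) (r x')
          + ∑ b ∈ T, c a b * psiBT (r a) (r b)) := by
    intro r
    rw [hsplit (fun a => ∑ b, c a b * psiBT (r a) (r b))]
    congr 1
    · congr 1
      · exact hsplit _
      · exact hsplit _
    · exact Finset.sum_congr rfl fun a _ => hsplit _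
  have hL : (∑ a, ∑ b, c a b * psiBT (r' a) (r' b))
      ≤ ∑ a, ∑ b, c a b * psiBT (r₂ a) (r₂ b) := by
    rw [hLsplit r', hLsplit r₂]
    have hpxx' : p₂ x x' = 1/2 := by rw [(hclone x).2, hprefl]
    have hpx'x : p₂ x' x = 1/2 := by rw [(hclone x).1, hprefl]
    -- diagonal terms
    have hd1 : c x x * psiBT (r' x) (r' x) = c x x * psiBT (r₂ x) (r₂ x) := by
      rw [hr'x, psiBT_diag, psiBT_diag]
    have hd2 : c x' x' * psiBT (r' x') (r' x') = c x' x' * psiBT (r₂ x') (r₂ x') := by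
      rw [hr'x', psiBT_diag, psiBT_diag]
    -- cross terms
    have hcross : c x x' * psiBT (r' x) (r' x') + c x' x * psiBT (r' x') (r' x)
        ≤ c x x' * psiBT (r₂ x) (r₂ x') + c x' x * psiBT (r₂ x') (r₂ x) := by
      rw [hr'x, hr'x', psiBT_diag]
      have hB := lemB_BT u v
      have hab : 0 < α * β := mul_pos hα hβ
      rw [hcdef]
      simp only
      rw [hpxx', hpx'x, ← hαdef, ← hβdef, ← hudef, ← hvdef]
      nlinarith [hB, hab]
    -- a in {x,x'}, b in T
    have hS1 : (∑ b ∈ T, c x b * psiBT (r' x) (r' b))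
        + (∑ b ∈ T, c x' b * psiBT (r' x') (r' b))
        ≤ (∑ b ∈ T, c x b * psiBT (r₂ x) (r₂ b))
        + (∑ b ∈ T, c x' b * psiBT (r₂ x') (r₂ b)) := by
      rw [← Finset.sum_add_distrib, ← Finset.sum_add_distrib]
      apply Finset.sum_le_sum
      intro b hb
      rw [hr'x, hr'x', hT b hb]
      have hA1 := lemA1_BT hα hβ u v (r₂ b)
      have hwp : 0 ≤ w' b * p₂ x b := mul_nonneg (hw' b).le (hp01 x b).1
      have hkey := mul_le_mul_of_nonneg_left hA1 hwp
      rw [hcdef]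
      simp only
      rw [(hclone b).1, ← hαdef, ← hβdef, ← hudef, ← hvdef]
      nlinarith [hkey]
    -- a in T
    have hS2 : (∑ a ∈ T, (c a x * psiBT (r' a) (r' x) + c a x' * psiBT (r' a) (r' x')
          + ∑ b ∈ T, c a b * psiBT (r' a) (r' b)))
        ≤ ∑ a ∈ T, (c a x * psiBT (r₂ a) (r₂ x) + c a x' * psiBT (r₂ a) (r₂ x')
          + ∑ b ∈ T, c a b * psiBT (r₂ a) (r₂ b)) := by
      apply Finset.sum_le_sum
      intro a ha
      have hin : (∑ b ∈ T, c a b * psiBT (r' a) (r' b))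
          = ∑ b ∈ T, c a b * psiBT (r₂ a) (r₂ b) :=
        Finset.sum_congr rfl fun b hb => by rw [hT a ha, hT b hb]
      rw [hin, hr'x, hr'x', hT a ha]
      have hA2 := lemA2_BT hα hβ u v (r₂ a)
      have hwp : 0 ≤ w' a * p₂ a x := mul_nonneg (hw' a).le (hp01 a x).1
      have hkey := mul_le_mul_of_nonneg_left hA2 hwp
      rw [hcdef]
      simp only
      rw [(hclone a).2, ← hαdef, ← hβdef, ← hudef, ← hvdef]
      nlinarith [hkey]
    linarith [hd1, hd2, hcross, hS1, hS2]
  have hR : (∑ a, w' a * (r' a) ^ 2) < ∑ a, w' a * (r₂ a) ^ 2 := by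
    rw [hsplit (fun a => w' a * (r' a) ^ 2), hsplit (fun a => w' a * (r₂ a) ^ 2)]
    have hTeq : (∑ a ∈ T, w' a * (r' a) ^ 2) = ∑ a ∈ T, w' a * (r₂ a) ^ 2 :=
      Finset.sum_congr rfl fun a ha => by rw [hT a ha]
    rw [hTeq, hr'x, hr'x']
    have hC := lemC_BT hα hβ hne
    rw [← hαdef, ← hβdef, ← hudef, ← hvdef]
    nlinarith [hC]
  have := mul_lt_mul_of_pos_left hR (by positivity : (0:ℝ) < lam / 2)
  linarith [hL, this]
end

section
/- Exact clone collapsing: with M, x, x', M', w', p₂ and r₂ as above (so r₂(x') = r₂(x)), define w₁: M → (0,∞) by w₁(y) = w'(y) for y ≠ x and w₁(x) = w'(x) + w'(x'), and let r₁ be the unique minimizer of the weighted objective over M with weights w₁ and win rates given by the restriction of p₂ to M. Then r₁(y) = r₂(y) for all y ∈ M. -/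
open Real Finset

/-!
Minimizers are unique: `log (exp u / (exp u + exp v)) = -log (1 + exp (v - u))` is jointly
concave, so with `λ > 0` the ridge term makes the objective strictly midpoint convex.

The clone and the original get equal scores at the minimizer `r₂` of the objective over `M'`.
With `u = r₂ x'` and `v = r₂ x`, give `x'` the score `v` (weighted by `w x`) or give `x` the score
`u` (weighted by `w x'`); since `x'` has the same win rates as `x`, every term involving a third
item cancels in this weighted combination, which differs from `(w x + w x') f(r₂)` by a
positive multiple of `logWinProb u v + logWinProb v u + 2 log 2`. That quantity is negative
unless `u = v`.

So `r₂` is lifted from its restriction to `M`, and on lifted scores the objective over `M'` is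
the objective over `M` with the clone's weight merged into `x`. Hence the restriction of `r₂`
minimizes the collapsed objective, and uniqueness identifies it with `r₁`.
-/

noncomputable def logWinProb (u v : ℝ) : ℝ := log (exp u / (exp u + exp v))

lemma logWinProb_eq_neg_log_one_add_exp (u v : ℝ) :
    logWinProb u v = -log (1 + exp (v - u)) := by
  rw [logWinProb, ← log_inv, exp_sub]
  congr 1
  field_simp

lemma logWinProb_self (u : ℝ) : logWinProb u u = -log 2 := by
  rw [logWinProb_eq_neg_log_one_add_exp, sub_self, exp_zero, one_add_one_eq_two]

lemma logWinProb_add_logWinProb_swap (u v : ℝ) :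
    logWinProb u v + logWinProb v u = -log (2 + 2 * cosh (v - u)) := by
  rw [logWinProb_eq_neg_log_one_add_exp, logWinProb_eq_neg_log_one_add_exp, ← neg_add,
    ← log_mul (by positivity) (by positivity), cosh_eq, neg_sub, exp_sub v u, exp_sub u v]
  congr 2
  field_simp
  ring

lemma logWinProb_add_logWinProb_swap_lt {u v : ℝ} (h : u ≠ v) :
    logWinProb u v + logWinProb v u < -(2 * log 2) := by
  have hcosh : 1 < cosh (v - u) := one_lt_cosh.2 (sub_ne_zero.2 h.symm)
  rw [logWinProb_add_logWinProb_swap, neg_lt_neg_iff, ← log_rpow two_pos, Real.rpow_two]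
  exact log_lt_log (by norm_num) (by linarith)

lemma log_one_add_exp_midpoint_le (s t : ℝ) :
    log (1 + exp ((s + t) / 2)) ≤ (log (1 + exp s) + log (1 + exp t)) / 2 := by
  have hs : exp s = exp (s / 2) ^ 2 := by rw [← exp_nat_mul]; ring_nf
  have ht : exp t = exp (t / 2) ^ 2 := by rw [← exp_nat_mul]; ring_nf
  have hst : exp ((s + t) / 2) = exp (s / 2) * exp (t / 2) := by rw [← exp_add]; ring_nf
  have hsq : (1 + exp ((s + t) / 2)) ^ 2 ≤ (1 + exp s) * (1 + exp t) := by
    rw [hs, ht, hst]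
    nlinarith [two_mul_le_add_sq (exp (s / 2)) (exp (t / 2))]
  have := log_le_log (by positivity) hsq
  rw [log_pow, log_mul (by positivity) (by positivity)] at this
  push_cast at this
  linarith

lemma logWinProb_midpoint (a b c d : ℝ) :
    (logWinProb a b + logWinProb c d) / 2 ≤ logWinProb ((a + c) / 2) ((b + d) / 2) := by
  simp only [logWinProb_eq_neg_log_one_add_exp]
  have := log_one_add_exp_midpoint_le (b - a) (d - c)
  rw [show (b - a + (d - c)) / 2 = (b + d) / 2 - (a + c) / 2 by ring] at this
  linarith

noncomputable def btObjective {α : Type*} [Fintype α] (w : α → ℝ) (p : α → α → ℝ) (lam : ℝ)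
    (r : α → ℝ) : ℝ :=
  -(∑ a, ∑ b, w a * w b * p a b * logWinProb (r a) (r b)) + lam / 2 * ∑ a, w a * r a ^ 2

section
variable {α : Type*} [Fintype α] {w : α → ℝ} {p : α → α → ℝ} {lam : ℝ}

lemma btObjective_midpoint_add_le (hw : ∀ a, 0 ≤ w a) (hp : ∀ a b, 0 ≤ p a b) (r s : α → ℝ) :
    btObjective w p lam (fun a => (r a + s a) / 2) + lam / 2 * ∑ a, w a * ((r a - s a) / 2) ^ 2
      ≤ (btObjective w p lam r + btObjective w p lam s) / 2 := by
  have hpair : ((∑ a, ∑ b, w a * w b * p a b * logWinProb (r a) (r b))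
        + ∑ a, ∑ b, w a * w b * p a b * logWinProb (s a) (s b)) / 2
      ≤ ∑ a, ∑ b, w a * w b * p a b * logWinProb ((r a + s a) / 2) ((r b + s b) / 2) := by
    simp only [← sum_add_distrib, sum_div]
    refine sum_le_sum fun a _ => sum_le_sum fun b _ => ?_
    have hc : 0 ≤ w a * w b * p a b := mul_nonneg (mul_nonneg (hw a) (hw b)) (hp a b)
    linarith [mul_le_mul_of_nonneg_left (logWinProb_midpoint (r a) (r b) (s a) (s b)) hc]
  have hquad : ∑ a, w a * ((r a + s a) / 2) ^ 2 + ∑ a, w a * ((r a - s a) / 2) ^ 2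
      = (∑ a, w a * r a ^ 2 + ∑ a, w a * s a ^ 2) / 2 := by
    simp only [← sum_add_distrib, sum_div]
    exact sum_congr rfl fun a _ => by ring
  rw [btObjective, btObjective, btObjective]
  linear_combination hpair + lam / 2 * hquad

lemma btObjective_minimizer_unique (hw : ∀ a, 0 < w a) (hp : ∀ a b, 0 ≤ p a b) (hlam : 0 < lam)
    {r s : α → ℝ} (hr : ∀ t, btObjective w p lam r ≤ btObjective w p lam t)
    (hs : ∀ t, btObjective w p lam s ≤ btObjective w p lam t) : r = s := by
  by_contra hne
  obtain ⟨a, ha⟩ := Function.ne_iff.1 hne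
  have hdist : 0 < ∑ b, w b * ((r b - s b) / 2) ^ 2 := by
    refine sum_pos' (fun b _ => mul_nonneg (hw b).le (sq_nonneg _)) ⟨a, mem_univ a, ?_⟩
    have : r a - s a ≠ 0 := sub_ne_zero.2 ha
    have := hw a
    positivity
  have hmid := btObjective_midpoint_add_le (lam := lam) (fun a => (hw a).le) hp r s
  linarith [hr (fun a => (r a + s a) / 2), hs (fun a => (r a + s a) / 2),
    mul_pos (half_pos hlam) hdist]

lemma btObjective_comp {β : Type*} [Fintype β] (φ : α → β) {w₁ : β → ℝ}
    (hw : ∀ g : β → ℝ, ∑ a, w a * g (φ a) = ∑ b, w₁ b * g b) (p₁ : β → β → ℝ) (r : β → ℝ) :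
    btObjective w (fun a a' => p₁ (φ a) (φ a')) lam (r ∘ φ) = btObjective w₁ p₁ lam r := by
  have hpair : ∀ a, ∑ a', w a * w a' * p₁ (φ a) (φ a') * logWinProb (r (φ a)) (r (φ a'))
      = w a * ∑ b', w₁ b' * (p₁ (φ a) b' * logWinProb (r (φ a)) (r b')) := by
    intro a
    rw [← hw, mul_sum]
    exact sum_congr rfl fun a' _ => by ring
  simp only [btObjective, Function.comp, hpair]
  rw [hw (fun b => ∑ b', w₁ b' * (p₁ b b' * logWinProb (r b) (r b'))), hw (fun b => r b ^ 2)]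
  simp only [mul_sum, mul_assoc]

variable [DecidableEq α]

lemma sum_eq_add_add_sum_compl_pair {M : Type*} [AddCommMonoid M] {i j : α} (hij : i ≠ j)
    (g : α → M) :
    ∑ a, g a = g i + g j + ∑ a ∈ {i, j}ᶜ, g a := by
  rw [← sum_add_sum_compl {i, j}, sum_pair hij]

lemma btObjective_eq_of_eqOn_compl_pair {i j : α} (hij : i ≠ j)
    (hi : ∀ z, p j z = p i z) (hj : ∀ z, p z j = p z i) {r ρ : α → ℝ}
    (hρ : ∀ a ∈ ({i, j} : Finset α)ᶜ, ρ a = r a) :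
    btObjective w p lam ρ =
      -((∑ a ∈ {i, j}ᶜ, ∑ b ∈ {i, j}ᶜ, w a * w b * p a b * logWinProb (r a) (r b))
        + w i * ∑ b ∈ {i, j}ᶜ,
            w b * (p i b * logWinProb (ρ i) (r b) + p b i * logWinProb (r b) (ρ i))
        + w j * ∑ b ∈ {i, j}ᶜ,
            w b * (p i b * logWinProb (ρ j) (r b) + p b i * logWinProb (r b) (ρ j))
        + p i i * (w i ^ 2 * logWinProb (ρ i) (ρ i)
            + w i * w j * (logWinProb (ρ i) (ρ j) + logWinProb (ρ j) (ρ i))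
            + w j ^ 2 * logWinProb (ρ j) (ρ j)))
      + lam / 2 * ((∑ a ∈ {i, j}ᶜ, w a * r a ^ 2) + w i * ρ i ^ 2 + w j * ρ j ^ 2) := by
  rw [btObjective]
  simp only [sum_eq_add_add_sum_compl_pair hij]
  simp +contextual only [hρ, hi, hj, mul_sum, sum_add_distrib, mul_add]
  ring_nf

lemma btObjective_clone_combination {i j : α} (hij : i ≠ j)
    (hi : ∀ z, p j z = p i z) (hj : ∀ z, p z j = p z i) (r : α → ℝ) :
    w j * btObjective w p lam (Function.update r i (r j))
      + w i * btObjective w p lam (Function.update r j (r i))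
      - (w i + w j) * btObjective w p lam r
      = w i * w j * (w i + w j) * p i i * (logWinProb (r i) (r j) + logWinProb (r j) (r i)
          - logWinProb (r i) (r i) - logWinProb (r j) (r j)) := by
  have hoff : ∀ a ∈ ({i, j} : Finset α)ᶜ, a ≠ i ∧ a ≠ j := fun a ha => by simpa [not_or] using ha
  rw [btObjective_eq_of_eqOn_compl_pair hij hi hj
      fun a ha => Function.update_of_ne (hoff a ha).1 (r j) r,
    btObjective_eq_of_eqOn_compl_pair hij hi hj
      fun a ha => Function.update_of_ne (hoff a ha).2 (r i) r,
    btObjective_eq_of_eqOn_compl_pair hij hi hj (r := r) fun _ _ => rfl]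
  simp only [Function.update_self, Function.update_of_ne hij, Function.update_of_ne hij.symm]
  ring

lemma btObjective_minimizer_clone_eq (hw : ∀ a, 0 < w a) {i j : α} (hij : i ≠ j)
    (hi : ∀ z, p j z = p i z) (hj : ∀ z, p z j = p z i) (hpii : 0 < p i i)
    {r : α → ℝ} (hr : ∀ t, btObjective w p lam r ≤ btObjective w p lam t) : r i = r j := by
  by_contra hne
  have hcomb := btObjective_clone_combination (w := w) (lam := lam) hij hi hj r
  have hgap := logWinProb_add_logWinProb_swap_lt hne
  rw [logWinProb_self, logWinProb_self] at hcomb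
  have hcoef : 0 < w i * w j * (w i + w j) * p i i := by
    have := hw i; have := hw j; positivity
  nlinarith [mul_le_mul_of_nonneg_left (hr (Function.update r i (r j))) (hw j).le,
    mul_le_mul_of_nonneg_left (hr (Function.update r j (r i))) (hw i).le]

end

lemma sum_mul_getD_eq_sum_mul {M : Type*} [Fintype M] [DecidableEq M] {x : M}
    {w' : Option M → ℝ} {w₁ : M → ℝ}
    (hw₁ : ∀ y, w₁ y = if y = x then w' (some x) + w' none else w' (some y))
    (g : M → ℝ) : ∑ a, w' a * g (a.getD x) = ∑ y, w₁ y * g y := by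
  have hsplit : ∀ y, w₁ y * g y = w' (some y) * g y + if y = x then w' none * g y else 0 := by
    intro y
    rw [hw₁]
    split_ifs with h
    · rw [h]; ring
    · ring
  simp only [Fintype.sum_option, Option.getD_none, Option.getD_some, hsplit, sum_add_distrib,
    sum_ite_eq', mem_univ, if_true]
  ring

theorem weighted_mle_clone_collapsing_general {M : Type*} [Fintype M]
    [DecidableEq M] (x : M)
    (w' : Option M → ℝ) (hw' : ∀ a, 0 < w' a)
    (lam : ℝ) (hlam : 0 < lam)
    (p₂ : Option M → Option M → ℝ) (hp01 : ∀ a b, p₂ a b ∈ Set.Icc (0 : ℝ) 1)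
    (hprefl : ∀ a, p₂ a a = 1/2)
    (hclone : ∀ y : Option M, p₂ none y = p₂ (some x) y ∧ p₂ y none = p₂ y (some x))
    (f₂ : (Option M → ℝ) → ℝ)
    (hf₂ : ∀ r : Option M → ℝ,
      f₂ r = -(∑ a, ∑ b, w' a * w' b * p₂ a b *
              Real.log (Real.exp (r a) / (Real.exp (r a) + Real.exp (r b))))
            + lam / 2 * ∑ a, w' a * (r a)^2)
    (r₂ : Option M → ℝ) (hr₂ : ∀ r, f₂ r₂ ≤ f₂ r)
    (w₁ : M → ℝ)
    (hw₁ : ∀ y : M, w₁ y = if y = x then w' (some x) + w' none else w' (some y))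
    (f₁ : (M → ℝ) → ℝ)
    (hf₁ : ∀ r : M → ℝ,
      f₁ r = -(∑ a, ∑ b, w₁ a * w₁ b * p₂ (some a) (some b) *
              Real.log (Real.exp (r a) / (Real.exp (r a) + Real.exp (r b))))
            + lam / 2 * ∑ a, w₁ a * (r a)^2)
    (r₁ : M → ℝ) (hr₁ : ∀ r, f₁ r₁ ≤ f₁ r) :
    ∀ y : M, r₁ y = r₂ (some y) := by
  obtain rfl : f₂ = btObjective w' p₂ lam := funext hf₂
  obtain rfl : f₁ = btObjective w₁ (fun a b => p₂ (some a) (some b)) lam := funext hf₁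
  have hr₂_clone : r₂ none = r₂ (some x) :=
    btObjective_minimizer_clone_eq hw' (Option.some_ne_none x).symm
      (fun z => (hclone z).1.symm) (fun z => (hclone z).2.symm) (by rw [hprefl]; norm_num) hr₂
  have hp₂ : p₂ = fun a b => p₂ (some (a.getD x)) (some (b.getD x)) := by
    funext a b
    cases a <;> cases b <;> simp [hclone]
  have hr₂_lift : r₂ = (fun y => r₂ (some y)) ∘ fun a => a.getD x := by
    funext a
    cases a <;> simp [hr₂_clone]
  have hcollapse := btObjective_comp (fun a : Option M => a.getD x) (sum_mul_getD_eq_sum_mul hw₁)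
    (lam := lam) (fun a b => p₂ (some a) (some b))
  have hr₂_min : ∀ r, btObjective w₁ (fun a b => p₂ (some a) (some b)) lam (fun y => r₂ (some y))
      ≤ btObjective w₁ (fun a b => p₂ (some a) (some b)) lam r := fun r => by
    rw [← hcollapse, ← hcollapse, ← hp₂, ← hr₂_lift]
    exact hr₂ _
  have hw₁_pos : ∀ y, 0 < w₁ y := fun y => by
    rw [hw₁]; split_ifs <;> linarith [hw' none, hw' (some x), hw' (some y)]
  exact congrFun (btObjective_minimizer_unique hw₁_pos (fun _ _ => (hp01 _ _).1) hlam hr₁ hr₂_min)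

/-- Exact clone collapsing: modeling `M' = M ∪ {x'}` as `Option M` with `x' = none`
and the clone target `x : M`, if the clone's weight is merged into `x` (giving
weights `w₁` on `M`) and the win rates restricted to `M`, then the weighted MLE
`r₁` over `M` agrees with the weighted MLE `r₂` over `M'` on every `y ∈ M`. -/
theorem weighted_mle_clone_collapsing {M : Type*} [Fintype M] [Nonempty M]
    [DecidableEq M] (x : M)
    (w' : Option M → ℝ) (hw' : ∀ a, 0 < w' a) (hw'1 : ∑ a, w' a = 1)
    (lam : ℝ) (hlam : 0 < lam)
    (p₂ : Option M → Option M → ℝ) (hp01 : ∀ a b, p₂ a b ∈ Set.Icc (0 : ℝ) 1)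
    (hpsym : ∀ a b, p₂ a b + p₂ b a = 1) (hprefl : ∀ a, p₂ a a = 1/2)
    (hclone : ∀ y : Option M, p₂ none y = p₂ (some x) y ∧ p₂ y none = p₂ y (some x))
    (f₂ : (Option M → ℝ) → ℝ)
    (hf₂ : ∀ r : Option M → ℝ,
      f₂ r = -(∑ a, ∑ b, w' a * w' b * p₂ a b *
              Real.log (Real.exp (r a) / (Real.exp (r a) + Real.exp (r b))))
            + lam / 2 * ∑ a, w' a * (r a)^2)
    (r₂ : Option M → ℝ) (hr₂ : ∀ r, f₂ r₂ ≤ f₂ r)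
    (w₁ : M → ℝ)
    (hw₁ : ∀ y : M, w₁ y = if y = x then w' (some x) + w' none else w' (some y))
    (f₁ : (M → ℝ) → ℝ)
    (hf₁ : ∀ r : M → ℝ,
      f₁ r = -(∑ a, ∑ b, w₁ a * w₁ b * p₂ (some a) (some b) *
              Real.log (Real.exp (r a) / (Real.exp (r a) + Real.exp (r b))))
            + lam / 2 * ∑ a, w₁ a * (r a)^2)
    (r₁ : M → ℝ) (hr₁ : ∀ r, f₁ r₁ ≤ f₁ r) :
    ∀ y : M, r₁ y = r₂ (some y) :=
  weighted_mle_clone_collapsing_general x w' hw' lam hlam p₂ hp01 hprefl hclone f₂ hf₂ r₂ hr₂ w₁ hw₁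
    f₁ hf₁ r₁ hr₁
end

section
/- For the regularized MLE r̂ (with λ > 0) over a finite set M with win rates p satisfying p(x≻y)+p(y≻x)=1, the ranking induced by r̂ agrees with the ranking by average win rate: for all x, y ∈ M, r̂(x) ≥ r̂(y) if and only if (1/m)Σ_{z∈M} p(x≻z) ≥ (1/m)Σ_{z∈M} p(y≻z). -/
open Real Finset

/-- The regularized MLE ranks alternatives in the same order as the average win
rate: `r̂(x) ≥ r̂(y)` iff `AWR(x) ≥ AWR(y)`. -/
theorem regularized_mle_ranking_matches_average_win_rate {M : Type*} [Fintype M]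
    [Nonempty M]
    (lam : ℝ) (hlam : 0 < lam)
    (p : M → M → ℝ) (hp01 : ∀ x y, p x y ∈ Set.Icc (0 : ℝ) 1)
    (hpsym : ∀ x y, p x y + p y x = 1) (hprefl : ∀ x, p x x = 1/2)
    (f : (M → ℝ) → ℝ)
    (hf : ∀ r : M → ℝ,
      f r = -(∑ x₁, ∑ x₂, p x₁ x₂ *
              Real.log (Real.exp (r x₁) / (Real.exp (r x₁) + Real.exp (r x₂))))
            + lam / 2 * ∑ x, (r x)^2)
    (rhat : M → ℝ) (hrhat : ∀ r, f rhat ≤ f r) :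
    ∀ x y : M,
      rhat x ≥ rhat y ↔
        (1 / (Fintype.card M : ℝ)) * ∑ z, p x z
          ≥ (1 / (Fintype.card M : ℝ)) * ∑ z, p y z := by
  have key : ∀ x : M,
      lam * rhat x + ∑ z, Real.exp (rhat x) / (Real.exp (rhat x) + Real.exp (rhat z))
        = ∑ z, p x z := by
    intro x
    classical
    set g : M → ℝ → ℝ := fun z t => if z = x then rhat x + t else rhat z with hgdef
    set c : M → ℝ := fun z => if z = x then (1:ℝ) else 0 with hcdef
    have hg0 : ∀ z, g z 0 = rhat z := by
      intro z; by_cases h : z = x <;> simp [hgdef, h]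
    have hg : ∀ z, HasDerivAt (g z) (c z) 0 := by
      intro z
      by_cases h : z = x
      · simpa [hgdef, hcdef, h] using (hasDerivAt_id (0:ℝ)).const_add (rhat x)
      · simpa [hgdef, hcdef, h] using hasDerivAt_const (0:ℝ) (rhat z)
    set φ : ℝ → ℝ := fun t => f (fun z => g z t) with hφdef
    have hφ0 : (fun z => g z 0) = rhat := funext hg0
    have hmin : IsLocalMin φ 0 := by
      apply Filter.Eventually.of_forall
      intro t
      show φ 0 ≤ φ t
      simp only [hφdef, hφ0]
      exact hrhat _
    -- rewrite φ
    have hφ : ∀ t, φ t = -(∑ x₁, ∑ x₂, p x₁ x₂ *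
        (g x₁ t - Real.log (Real.exp (g x₁ t) + Real.exp (g x₂ t))))
        + lam / 2 * ∑ z, (g z t)^2 := by
      intro t
      simp only [hφdef, hf]
      congr 2
      apply Finset.sum_congr rfl; intro x₁ _
      apply Finset.sum_congr rfl; intro x₂ _
      rw [Real.log_div (Real.exp_ne_zero _) (by positivity), Real.log_exp]
    set D : ℝ := -(∑ x₁, ∑ x₂, p x₁ x₂ *
        (c x₁ - (Real.exp (rhat x₁) * c x₁ + Real.exp (rhat x₂) * c x₂) /
          (Real.exp (rhat x₁) + Real.exp (rhat x₂))))
        + lam / 2 * ∑ z, (2:ℕ) * rhat z ^ 1 * c z with hDdef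
    have hderiv : HasDerivAt φ D 0 := by
      have h1 : HasDerivAt (fun t => -(∑ x₁, ∑ x₂, p x₁ x₂ *
          (g x₁ t - Real.log (Real.exp (g x₁ t) + Real.exp (g x₂ t))))
          + lam / 2 * ∑ z, (g z t)^2) D 0 := by
        apply HasDerivAt.add
        · apply HasDerivAt.neg
          apply HasDerivAt.fun_sum
          intro x₁ _
          apply HasDerivAt.fun_sum
          intro x₂ _
          apply HasDerivAt.const_mul
          have he1 : HasDerivAt (fun t => Real.exp (g x₁ t)) (Real.exp (rhat x₁) * c x₁) 0 := by
            simpa [hg0] using (hg x₁).exp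
          have he2 : HasDerivAt (fun t => Real.exp (g x₂ t)) (Real.exp (rhat x₂) * c x₂) 0 := by
            simpa [hg0] using (hg x₂).exp
          have hlog := (he1.fun_add he2).log (by
            beta_reduce; rw [hg0, hg0]; positivity)
          simp only [hg0] at hlog
          exact (hg x₁).sub hlog
        · apply HasDerivAt.const_mul
          apply HasDerivAt.fun_sum
          intro z _
          simpa [hg0] using (hg z).fun_pow 2
      have := h1
      apply HasDerivAt.congr_of_eventuallyEq this
      apply Filter.Eventually.of_forall
      intro t
      exact hφ t
    have hD0 : D = 0 := hmin.hasDerivAt_eq_zero hderiv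
    -- now algebra
    have hreg : lam / 2 * ∑ z, (2:ℕ) * rhat z ^ 1 * c z = lam * rhat x := by
      simp only [hcdef, mul_ite, mul_one, mul_zero]
      rw [Finset.sum_ite_eq' Finset.univ x]
      simp; ring
    have hsplit : (∑ x₁, ∑ x₂, p x₁ x₂ *
        (c x₁ - (Real.exp (rhat x₁) * c x₁ + Real.exp (rhat x₂) * c x₂) /
          (Real.exp (rhat x₁) + Real.exp (rhat x₂))))
        = ∑ z, p x z - ∑ z, Real.exp (rhat x) / (Real.exp (rhat x) + Real.exp (rhat z)) := by
      have expand : ∀ x₁ x₂ : M, p x₁ x₂ *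
          (c x₁ - (Real.exp (rhat x₁) * c x₁ + Real.exp (rhat x₂) * c x₂) /
            (Real.exp (rhat x₁) + Real.exp (rhat x₂)))
          = p x₁ x₂ * c x₁
            - p x₁ x₂ * Real.exp (rhat x₁) / (Real.exp (rhat x₁) + Real.exp (rhat x₂)) * c x₁
            - p x₁ x₂ * Real.exp (rhat x₂) / (Real.exp (rhat x₁) + Real.exp (rhat x₂)) * c x₂ := by
        intro x₁ x₂
        field_simp
        ring
      simp only [expand, Finset.sum_sub_distrib]
      have s1 : ∑ x₁, ∑ x₂, p x₁ x₂ * c x₁ = ∑ z, p x z := by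
        rw [Finset.sum_eq_single x]
        · simp [hcdef]
        · intro b _ h; simp [hcdef, h]
        · intro h; exact absurd (Finset.mem_univ x) h
      have s2 : ∑ x₁, ∑ x₂, p x₁ x₂ * Real.exp (rhat x₁) /
          (Real.exp (rhat x₁) + Real.exp (rhat x₂)) * c x₁
          = ∑ z, p x z * Real.exp (rhat x) / (Real.exp (rhat x) + Real.exp (rhat z)) := by
        rw [Finset.sum_eq_single x]
        · simp [hcdef]
        · intro b _ h; simp [hcdef, h]
        · intro h; exact absurd (Finset.mem_univ x) h
      have s3 : ∑ x₁, ∑ x₂, p x₁ x₂ * Real.exp (rhat x₂) /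
          (Real.exp (rhat x₁) + Real.exp (rhat x₂)) * c x₂
          = ∑ z, p z x * Real.exp (rhat x) / (Real.exp (rhat z) + Real.exp (rhat x)) := by
        apply Finset.sum_congr rfl
        intro x₁ _
        simp only [hcdef, mul_ite, mul_one, mul_zero]
        rw [Finset.sum_ite_eq' Finset.univ x (fun x₂ => p x₁ x₂ * Real.exp (rhat x₂) /
          (Real.exp (rhat x₁) + Real.exp (rhat x₂)))]
        simp
      rw [s1, s2, s3]
      have : ∀ z : M, p x z * Real.exp (rhat x) / (Real.exp (rhat x) + Real.exp (rhat z))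
          + p z x * Real.exp (rhat x) / (Real.exp (rhat z) + Real.exp (rhat x))
          = Real.exp (rhat x) / (Real.exp (rhat x) + Real.exp (rhat z)) := by
        intro z
        rw [add_comm (Real.exp (rhat z))]
        rw [← add_div, ← add_mul]
        rw [hpsym x z, one_mul]
      rw [sub_sub]
      congr 1
      rw [← Finset.sum_add_distrib]
      exact Finset.sum_congr rfl (fun z _ => this z)
    rw [hDdef] at hD0
    rw [hsplit, hreg] at hD0
    linarith
  -- strict monotonicity of u ↦ lam * u + ∑ z, exp u / (exp u + exp (rhat z))
  have hmono : StrictMono (fun u : ℝ =>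
      lam * u + ∑ z, Real.exp u / (Real.exp u + Real.exp (rhat z))) := by
    intro u v huv
    apply add_lt_add_of_lt_of_le
    · exact (mul_lt_mul_iff_right₀ hlam).2 huv
    · apply Finset.sum_le_sum
      intro z _
      rw [div_le_div_iff₀ (by positivity) (by positivity)]
      have h1 : Real.exp u ≤ Real.exp v := Real.exp_le_exp.2 huv.le
      nlinarith [Real.exp_pos u, Real.exp_pos v, Real.exp_pos (rhat z)]
  intro x y
  have hcard : (0:ℝ) < 1 / (Fintype.card M : ℝ) := by
    have : 0 < (Fintype.card M : ℝ) := by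
      exact_mod_cast Fintype.card_pos
    positivity
  constructor
  · intro h
    have := hmono.le_iff_le.2 (h : rhat y ≤ rhat x)
    rw [key x, key y] at this
    exact (mul_le_mul_iff_right₀ hcard).2 this
  · intro h
    have h' : ∑ z, p y z ≤ ∑ z, p x z := by
      have := (mul_le_mul_iff_right₀ hcard).1 h
      exact this
    rw [← key x, ← key y] at h'
    exact hmono.le_iff_le.1 h'
end
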